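/- In GLP_ω, for every worm A and every n, ⟨n+1⟩A is a strict upper bound of the sequence (Q^k_n(A))_{k∈ω} in the <_0 ordering, and the sequence (Q^k_n(A))_{k∈ω} is strictly <_n-increasing. -/

import Mathlib

/-!
By induction on `k`, `⟨n+1⟩A ⊢ Q^k_n(A)`. For the step write `Q^k_n(A) = ⟨n⟩ψ`.
If `[n]¬(A ∧ Q^k_n(A))`, then also `[n+1]¬(A ∧ Q^k_n(A))`, which together with `⟨n+1⟩A`
gives `⟨n+1⟩¬Q^k_n(A) = ⟨n+1⟩[n]¬ψ`; the axiom `⟨n⟩φ → [n+1]⟨n⟩φ` turns this into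
`[n]¬ψ`, contradicting the induction hypothesis. Both claims then follow from
`Q^{k+1}_n(A) → ⟨n⟩Q^k_n(A)` and `⟨n⟩φ → ⟨0⟩φ`.
-/

/-- Formulas of polymodal provability logic GLP_ω with modalities [n], n ∈ ℕ. -/
inductive GLPFormula : Type where
  | bot : GLPFormula
  | var : ℕ → GLPFormula
  | imp : GLPFormula → GLPFormula → GLPFormula
  | and : GLPFormula → GLPFormula → GLPFormula
  | box : ℕ → GLPFormula → GLPFormula

namespace GLPFormula

def neg (A : GLPFormula) : GLPFormula := imp A bot
def top : GLPFormula := neg bot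
def dia (n : ℕ) (A : GLPFormula) : GLPFormula := neg (box n (neg A))
def iff (A B : GLPFormula) : GLPFormula := and (imp A B) (imp B A)

/-- A formula is a propositional tautology if every boolean valuation commuting with
the propositional connectives (and arbitrary on boxes and variables) makes it true. -/
def IsTaut (A : GLPFormula) : Prop :=
  ∀ v : GLPFormula → Bool, v bot = false →
    (∀ B C, v (imp B C) = (!v B || v C)) →
    (∀ B C, v (and B C) = (v B && v C)) →
    v A = true

/-- Hilbert-style provability in GLP_ω. -/
inductive Proof : GLPFormula → Prop where
  | taut {A} : IsTaut A → Proof A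
  | k {n A B} : Proof ((box n (A.imp B)).imp ((box n A).imp (box n B)))
  | lob {n A} : Proof ((box n ((box n A).imp A)).imp (box n A))
  | mono {m n : ℕ} {A} : m ≤ n → Proof ((box m A).imp (box n A))
  | negIntro {m n : ℕ} {A} : m < n → Proof ((dia m A).imp (box n (dia m A)))
  | mp {A B} : Proof (A.imp B) → Proof A → Proof B
  | nec {n A} : Proof A → Proof (box n A)

/-- Q^0_n(φ) = ⟨n⟩φ, Q^{k+1}_n(φ) = ⟨n⟩(φ ∧ Q^k_n(φ)). -/
def Q (n : ℕ) (φ : GLPFormula) : ℕ → GLPFormula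
  | 0 => dia n φ
  | k + 1 => dia n (φ.and (Q n φ k))

/-- Worms: iterated consistency statements. -/
inductive IsWorm : GLPFormula → Prop where
  | top : IsWorm top
  | dia (n : ℕ) {A} : IsWorm A → IsWorm (dia n A)

end GLPFormula

open GLPFormula

/-- The ordering on GLP formulas: φ <_m ψ iff GLP ⊢ ψ → ⟨m⟩φ. -/
def ltGLP (m : ℕ) (φ ψ : GLPFormula) : Prop := Proof (ψ.imp (dia m φ))

namespace GLPFormula.Proof

variable {m n : ℕ} {A B C : GLPFormula}

theorem imp_trans (hAB : Proof (A.imp B)) (hBC : Proof (B.imp C)) : Proof (A.imp C) :=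
  ((taut fun _ _ _ _ => by grind : Proof ((A.imp B).imp ((B.imp C).imp (A.imp C)))).mp hAB).mp hBC

theorem neg_imp_neg (h : Proof (A.imp B)) : Proof ((neg B).imp (neg A)) :=
  (taut fun _ _ _ _ => by grind [neg] : Proof ((A.imp B).imp ((neg B).imp (neg A)))).mp h

theorem box_mono (h : Proof (A.imp B)) : Proof ((box n A).imp (box n B)) :=
  k.mp (nec h)

theorem dia_mono (h : Proof (A.imp B)) : Proof ((dia n A).imp (dia n B)) :=
  neg_imp_neg (box_mono (neg_imp_neg h))

theorem dia_imp_dia_of_le (h : m ≤ n) : Proof ((dia n A).imp (dia m A)) :=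
  neg_imp_neg (mono h)

theorem imp_neg_neg : Proof (A.imp (neg (neg A))) :=
  taut fun _ _ _ _ => by grind [neg]

theorem neg_neg_imp : Proof ((neg (neg A)).imp A) :=
  taut fun _ _ _ _ => by grind [neg]

/-- The contrapositive of `negIntro` at `¬A`. -/
theorem dia_box_imp_box (h : m < n) : Proof ((dia n (box m A)).imp (box m A)) :=
  (dia_mono (box_mono imp_neg_neg)).imp_trans <|
    (neg_imp_neg (negIntro (A := neg A) h)).imp_trans <|
      neg_neg_imp.imp_trans (box_mono neg_neg_imp)

theorem box_imp_dia_imp_dia_and : Proof ((box n C).imp ((dia n A).imp (dia n (A.and C)))) :=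
  have hbox : Proof ((box n C).imp ((box n (neg (A.and C))).imp (box n (neg A)))) :=
    (box_mono (taut fun _ _ _ _ => by grind [neg])).imp_trans k
  hbox.imp_trans (taut fun _ _ _ _ => by grind [dia, neg])

theorem dia_imp_dia_and_dia (hmn : m < n) (h : Proof ((dia n A).imp (dia m B))) :
    Proof ((dia n A).imp (dia n (A.and (dia m B)))) := by
  have hbody : Proof ((A.and (neg (A.and (dia m B)))).imp (box m (neg B))) :=
    taut fun _ _ _ _ => by grind [dia, neg]
  have hreflect := (dia_mono (n := n) hbody).imp_trans (dia_box_imp_box hmn)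
  have hrefute : Proof ((box n (neg (A.and (dia m B)))).imp ((dia n A).imp (box m (neg B)))) :=
    (box_imp_dia_imp_dia_and (A := A)).imp_trans ((taut fun _ _ _ _ => by grind).mp hreflect)
  exact ((taut fun _ _ _ _ => by grind [dia, neg]).mp hrefute).mp h

end GLPFormula.Proof

namespace GLPFormula

theorem exists_Q_eq_dia (n : ℕ) (A : GLPFormula) (k : ℕ) : ∃ B, Q n A k = dia n B := by
  cases k <;> exact ⟨_, rfl⟩

theorem dia_succ_imp_Q (n : ℕ) (A : GLPFormula) : ∀ k, Proof ((dia (n + 1) A).imp (Q n A k))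
  | 0 => Proof.dia_imp_dia_of_le n.le_succ
  | k + 1 => by
    obtain ⟨B, hB⟩ := exists_Q_eq_dia n A k
    have ih := dia_succ_imp_Q n A k
    rw [hB] at ih
    rw [Q, hB]
    exact (Proof.dia_imp_dia_and_dia n.lt_succ_self ih).imp_trans
      (Proof.dia_imp_dia_of_le n.le_succ)

end GLPFormula

theorem Q_lt_Q_succ (n : ℕ) (A : GLPFormula) (k : ℕ) : ltGLP n (Q n A k) (Q n A (k + 1)) :=
  Proof.dia_mono (Proof.taut fun _ _ _ _ => by grind)

theorem glp_Q_bounds_general (n : ℕ) (A : GLPFormula) :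
    (∀ k, ltGLP 0 (Q n A k) (dia (n + 1) A)) ∧
      (∀ k, ltGLP n (Q n A k) (Q n A (k + 1))) :=
  ⟨fun k => (dia_succ_imp_Q n A (k + 1)).imp_trans <|
      (Q_lt_Q_succ n A k).imp_trans (Proof.dia_imp_dia_of_le n.zero_le),
    Q_lt_Q_succ n A⟩

/-- for every worm A and every n, ⟨n+1⟩A is a strict <_0-upper bound of
the sequence (Q^k_n(A))_k, and that sequence is strictly <_n-increasing. -/
theorem glp_Q_bounds (n : ℕ) (A : GLPFormula) (hA : IsWorm A) :
    (∀ k, ltGLP 0 (Q n A k) (dia (n + 1) A)) ∧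
      (∀ k, ltGLP n (Q n A k) (Q n A (k + 1))) :=
  glp_Q_bounds_general n A
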